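/- arXiv:2507.17998 — 3 statements merged into one kernel-verified Lean document; each statement's English description precedes it below -/
import Mathlib

section
/- Let k ≤ l < n be positive integers. Let b₁, …, b_l be orthonormal vectors in ℝⁿ, let R : ℝⁿ → ℝⁿ be an orthogonal linear map, and let d' ∈ ℝⁿ (the transformed displacement vector). Let V := span{R b₁, …, R b_l} ⊆ ℝⁿ, and let W ⊆ ℝⁿ⁺¹ be the linear span of the vectors (R b₁, 0), …, (R b_l, 0) together with (d', 1)/√(1 + ‖d'‖²). Let a₁, …, a_k be orthonormal vectors in ℝⁿ and c ∈ ℝⁿ, and set c̃ := (c, 1)/√(1 + ‖c‖²) ∈ ℝⁿ⁺¹. Then Σᵢ₌₁ᵏ ‖P_V aᵢ − aᵢ‖² + ‖P_W c̃ − c̃‖² = 0 if and only if the linear span of {(a₁, 0), …, (a_k, 0), c̃} in ℝⁿ⁺¹ is contained in W, where P_V and P_W denote the orthogonal projections onto V and W. -/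
/-- Append a last coordinate `x` to a vector of `ℝⁿ`, yielding a vector of `ℝⁿ⁺¹`. -/
noncomputable def append1 {n : ℕ} (v : EuclideanSpace ℝ (Fin n)) (x : ℝ) :
    EuclideanSpace ℝ (Fin (n + 1)) :=
  (EuclideanSpace.equiv (Fin (n + 1)) ℝ).symm (Fin.snoc ((EuclideanSpace.equiv (Fin n) ℝ) v) x)

/-- The normalized affine embedding `ṽ := (v, 1)/√(1 + ‖v‖²)`. -/
noncomputable def tilde {n : ℕ} (v : EuclideanSpace ℝ (Fin n)) :
    EuclideanSpace ℝ (Fin (n + 1)) :=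
  (Real.sqrt (1 + ‖v‖ ^ 2))⁻¹ • append1 v 1

/-! The cost is a sum of squared distances to subspaces, so it vanishes exactly when every `aᵢ`
lies in `V` and `c̃` lies in `W`. Since `W` is the image of `V` under `v ↦ (v, 0)` plus the line
through `d̃'`, whose last coordinate is nonzero, a vector `(v, 0)` lies in `W` exactly when
`v ∈ V`; so these memberships say that the generators of the embedded smaller subspace lie
in `W`. -/

open Submodule

theorem Submodule.sq_norm_orthogonalProjectionOnto_sub_eq_zero_iff {𝕜 E : Type*} [RCLike 𝕜]
    [NormedAddCommGroup E] [InnerProductSpace 𝕜 E] (K : Submodule 𝕜 E)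
    [K.HasOrthogonalProjection] (v : E) :
    ‖(K.orthogonalProjectionOnto v : E) - v‖ ^ 2 = 0 ↔ v ∈ K := by
  rw [pow_eq_zero_iff two_ne_zero, norm_eq_zero, sub_eq_zero]
  exact K.starProjection_eq_self_iff

theorem sum_sq_norm_orthogonalProjectionOnto_sub_add_eq_zero_iff {𝕜 ι E F : Type*} [RCLike 𝕜]
    [Fintype ι] [NormedAddCommGroup E] [InnerProductSpace 𝕜 E] [NormedAddCommGroup F]
    [InnerProductSpace 𝕜 F] (V : Submodule 𝕜 E) [V.HasOrthogonalProjection]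
    (W : Submodule 𝕜 F) [W.HasOrthogonalProjection] (a : ι → E) (x : F) :
    ∑ i, ‖(V.orthogonalProjectionOnto (a i) : E) - a i‖ ^ 2 +
        ‖(W.orthogonalProjectionOnto x : F) - x‖ ^ 2 = 0 ↔ (∀ i, a i ∈ V) ∧ x ∈ W := by
  rw [add_eq_zero_iff_of_nonneg (by positivity) (by positivity),
    Finset.sum_eq_zero_iff_of_nonneg (fun i _ => by positivity),
    W.sq_norm_orthogonalProjectionOnto_sub_eq_zero_iff]
  simp only [Finset.mem_univ, true_implies, V.sq_norm_orthogonalProjectionOnto_sub_eq_zero_iff]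

theorem Submodule.apply_mem_map_sup_span_singleton_iff {K E F : Type*} [Ring K]
    [NoZeroDivisors K] [AddCommGroup E] [Module K E] [AddCommGroup F] [Module K F]
    {f : E →ₗ[K] F} (hf : Function.Injective f) {φ : F →ₗ[K] K} (hφf : φ ∘ₗ f = 0)
    {w : F} (hw : φ w ≠ 0) (U : Submodule K E) (v : E) :
    f v ∈ U.map f ⊔ K ∙ w ↔ v ∈ U := by
  refine ⟨fun h => ?_, fun h => mem_sup_left (mem_map_of_mem h)⟩
  obtain ⟨_, ⟨u, hu, rfl⟩, _, hz, huz⟩ := mem_sup.1 h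
  obtain ⟨t, rfl⟩ := mem_span_singleton.1 hz
  have hφ : ∀ x, φ (f x) = 0 := fun x => LinearMap.congr_fun hφf x
  have ht : t = 0 := by
    have := congrArg φ huz
    rw [map_add, map_smul, hφ, hφ, zero_add, smul_eq_mul] at this
    exact (mul_eq_zero.1 this).resolve_right hw
  rw [ht, zero_smul, add_zero] at huz
  exact hf huz ▸ hu

lemma append1_castSucc {n : ℕ} (v : EuclideanSpace ℝ (Fin n)) (x : ℝ) (j : Fin n) :
    append1 v x (Fin.castSucc j) = v j := by
  simp [append1]

lemma append1_last {n : ℕ} (v : EuclideanSpace ℝ (Fin n)) (x : ℝ) :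
    append1 v x (Fin.last n) = x := by
  simp [append1]

noncomputable def append0L (n : ℕ) :
    EuclideanSpace ℝ (Fin n) →ₗ[ℝ] EuclideanSpace ℝ (Fin (n + 1)) where
  toFun v := append1 v 0
  map_add' v w := by
    ext i
    induction i using Fin.lastCases <;> simp [append1_last, append1_castSucc]
  map_smul' t v := by
    ext i
    induction i using Fin.lastCases <;> simp [append1_last, append1_castSucc]

lemma append0L_apply {n : ℕ} (v : EuclideanSpace ℝ (Fin n)) : append0L n v = append1 v 0 :=
  rfl

lemma append0L_injective (n : ℕ) : Function.Injective (append0L n) := fun v w h => by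
  ext j
  simpa [append0L_apply, append1_castSucc] using congrArg (· (Fin.castSucc j)) h

lemma proj_last_comp_append0L (n : ℕ) :
    (EuclideanSpace.proj (Fin.last n) : EuclideanSpace ℝ (Fin (n + 1)) →L[ℝ] ℝ).toLinearMap ∘ₗ
      append0L n = 0 := by
  ext v
  simp [append0L_apply, append1_last]

lemma tilde_last_ne_zero {n : ℕ} (d : EuclideanSpace ℝ (Fin n)) : tilde d (Fin.last n) ≠ 0 := by
  simp only [tilde, PiLp.smul_apply, append1_last, smul_eq_mul, mul_one]
  positivity

lemma append1_zero_mem_span_iff {n l : ℕ} (u : Fin l → EuclideanSpace ℝ (Fin n))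
    (d v : EuclideanSpace ℝ (Fin n)) :
    append1 v 0 ∈ span ℝ (Set.range (fun j => append1 (u j) 0) ∪ {tilde d}) ↔
      v ∈ span ℝ (Set.range u) := by
  have hspan : span ℝ (Set.range (fun j => append1 (u j) 0) ∪ {tilde d}) =
      (span ℝ (Set.range u)).map (append0L n) ⊔ ℝ ∙ tilde d := by
    rw [span_union, map_span, ← Set.range_comp]
    rfl
  rw [hspan, ← append0L_apply]
  exact apply_mem_map_sup_span_singleton_iff (append0L_injective n)
    (proj_last_comp_append0L n) (tilde_last_ne_zero d) _ v

theorem affine_registration_cost_eq_zero_iff_general (n k l : ℕ)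
    (b : Fin l → EuclideanSpace ℝ (Fin n))
    (R : EuclideanSpace ℝ (Fin n) ≃ₗᵢ[ℝ] EuclideanSpace ℝ (Fin n))
    (d' : EuclideanSpace ℝ (Fin n))
    (a : Fin k → EuclideanSpace ℝ (Fin n))
    (c : EuclideanSpace ℝ (Fin n))
    (V : Submodule ℝ (EuclideanSpace ℝ (Fin n)))
    (hV : V = Submodule.span ℝ (Set.range fun j => R (b j)))
    (W : Submodule ℝ (EuclideanSpace ℝ (Fin (n + 1))))
    (hW : W = Submodule.span ℝ (Set.range (fun j => append1 (R (b j)) 0) ∪ {tilde d'})) :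
    (∑ i, ‖(V.orthogonalProjection (a i) : EuclideanSpace ℝ (Fin n)) - a i‖ ^ 2) +
        ‖(W.orthogonalProjection (tilde c) : EuclideanSpace ℝ (Fin (n + 1))) - tilde c‖ ^ 2 = 0
      ↔ Submodule.span ℝ (Set.range (fun i => append1 (a i) 0) ∪ {tilde c}) ≤ W := by
  rw [sum_sq_norm_orthogonalProjectionOnto_sub_add_eq_zero_iff, span_le, Set.union_subset_iff,
    Set.range_subset_iff, Set.singleton_subset_iff]
  subst hV hW
  simp only [SetLike.mem_coe, append1_zero_mem_span_iff]

/-- The total projection-residual cost vanishes iff the embedded smaller affine subspace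
is contained in the embedded transformed larger affine subspace. -/
theorem affine_registration_cost_eq_zero_iff (n k l : ℕ)
    (hk : 0 < k) (hkl : k ≤ l) (hln : l < n)
    (b : Fin l → EuclideanSpace ℝ (Fin n)) (hb : Orthonormal ℝ b)
    (R : EuclideanSpace ℝ (Fin n) ≃ₗᵢ[ℝ] EuclideanSpace ℝ (Fin n))
    (d' : EuclideanSpace ℝ (Fin n))
    (a : Fin k → EuclideanSpace ℝ (Fin n)) (ha : Orthonormal ℝ a)
    (c : EuclideanSpace ℝ (Fin n))
    (V : Submodule ℝ (EuclideanSpace ℝ (Fin n)))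
    (hV : V = Submodule.span ℝ (Set.range fun j => R (b j)))
    (W : Submodule ℝ (EuclideanSpace ℝ (Fin (n + 1))))
    (hW : W = Submodule.span ℝ (Set.range (fun j => append1 (R (b j)) 0) ∪ {tilde d'})) :
    (∑ i, ‖(V.orthogonalProjection (a i) : EuclideanSpace ℝ (Fin n)) - a i‖ ^ 2) +
        ‖(W.orthogonalProjection (tilde c) : EuclideanSpace ℝ (Fin (n + 1))) - tilde c‖ ^ 2 = 0
      ↔ Submodule.span ℝ (Set.range (fun i => append1 (a i) 0) ∪ {tilde c}) ≤ W :=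
  affine_registration_cost_eq_zero_iff_general n k l b R d' a c V hV W hW
end

section
/- Let u, v, w be nonzero vectors in a real inner product space, and define the 1D Grassmann distance between the lines they span by d_Gr(x, y) := arccos(|⟨x, y⟩| / (‖x‖·‖y‖)). Then the triangle inequality d_Gr(u, w) ≤ d_Gr(u, v) + d_Gr(v, w) holds. -/
open scoped RealInnerProductSpace
open Real

lemma arccos_anti {x y : ℝ} (h : x ≤ y) : arccos y ≤ arccos x := by
  unfold Real.arccos
  have := Real.monotone_arcsin h
  linarith

lemma arccos_tri {a b c : ℝ} (ha : 0 ≤ a) (ha1 : a ≤ 1) (hb : 0 ≤ b) (hb1 : b ≤ 1)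
    (h : a * b - √(1 - a ^ 2) * √(1 - b ^ 2) ≤ c) :
    arccos c ≤ arccos a + arccos b := by
  have key : cos (arccos a + arccos b) = a * b - √(1 - a ^ 2) * √(1 - b ^ 2) := by
    rw [Real.cos_add, Real.cos_arccos (by linarith) ha1, Real.cos_arccos (by linarith) hb1,
      Real.sin_arccos, Real.sin_arccos]
  have h1 : arccos a + arccos b ≤ π := by
    have := Real.arccos_le_pi_div_two.2 ha
    have := Real.arccos_le_pi_div_two.2 hb
    linarith
  calc arccos c ≤ arccos (cos (arccos a + arccos b)) := arccos_anti (by rw [key]; exact h)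
    _ = arccos a + arccos b :=
      Real.arccos_cos (by have := Real.arccos_nonneg a; have := Real.arccos_nonneg b; linarith) h1

lemma key_ineq {E : Type*} [NormedAddCommGroup E] [InnerProductSpace ℝ E]
    (u v w : E) (hu : ‖u‖ = 1) (hv : ‖v‖ = 1) (hw : ‖w‖ = 1) :
    |⟪u, v⟫| * |⟪v, w⟫| - √(1 - |⟪u, v⟫| ^ 2) * √(1 - |⟪v, w⟫| ^ 2) ≤ |⟪u, w⟫| := by
  set a := ⟪u, v⟫ with ha
  set b := ⟪v, w⟫ with hb
  have hvu : ⟪v, u⟫ = a := (real_inner_comm v u).symm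
  have hwv : ⟪w, v⟫ = b := (real_inner_comm w v).symm
  have hvv : ⟪v, v⟫ = (1:ℝ) := by rw [real_inner_self_eq_norm_sq, hv]; norm_num
  have hup : ‖u - a • v‖ ^ 2 = 1 - a ^ 2 := by
    rw [← real_inner_self_eq_norm_sq]
    simp only [inner_sub_left, inner_sub_right, real_inner_smul_left, real_inner_smul_right,
      hvu, hvv, real_inner_self_eq_norm_sq, hu]
    rw [norm_smul, hv, mul_one, Real.norm_eq_abs, sq_abs, ← ha]; ring
  have hwp : ‖w - b • v‖ ^ 2 = 1 - b ^ 2 := by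
    rw [← real_inner_self_eq_norm_sq]
    simp only [inner_sub_left, inner_sub_right, real_inner_smul_left, real_inner_smul_right,
      hwv, hvv, real_inner_self_eq_norm_sq, hw]
    rw [norm_smul, hv, mul_one, Real.norm_eq_abs, sq_abs, ← hb]; ring
  have hdecomp : ⟪u - a • v, w - b • v⟫ = ⟪u, w⟫ - a * b := by
    simp only [inner_sub_left, inner_sub_right, real_inner_smul_left, real_inner_smul_right,
      hvu, hvv, ← hb]
    ring
  have hcs : |⟪u, w⟫ - a * b| ≤ √(1 - a ^ 2) * √(1 - b ^ 2) := by
    calc |⟪u, w⟫ - a * b| = |⟪u - a • v, w - b • v⟫| := by rw [hdecomp]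
      _ ≤ ‖u - a • v‖ * ‖w - b • v‖ := abs_real_inner_le_norm _ _
      _ = √(1 - a ^ 2) * √(1 - b ^ 2) := by
          rw [← Real.sqrt_sq (norm_nonneg (u - a•v)), ← Real.sqrt_sq (norm_nonneg (w - b•v)),
            hup, hwp]
  have h3 : |a * b| - |⟪u, w⟫| ≤ |⟪u, w⟫ - a * b| := by
    have := abs_sub_abs_le_abs_sub (a * b) ⟪u, w⟫
    rwa [abs_sub_comm] at this
  rw [show √(1 - |a| ^ 2) = √(1 - a ^ 2) by rw [sq_abs],
    show √(1 - |b| ^ 2) = √(1 - b ^ 2) by rw [sq_abs], ← abs_mul]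
  linarith

/-- The 1D Grassmann distance between the lines spanned by two nonzero vectors. -/
noncomputable def dGr {E : Type*} [NormedAddCommGroup E] [InnerProductSpace ℝ E]
    (u v : E) : ℝ :=
  Real.arccos (|⟪u, v⟫| / (‖u‖ * ‖v‖))

lemma dGr_unit {E : Type*} [NormedAddCommGroup E] [InnerProductSpace ℝ E]
    (u v : E) (hu : u ≠ 0) (hv : v ≠ 0) :
    dGr u v = Real.arccos |⟪‖u‖⁻¹ • u, ‖v‖⁻¹ • v⟫| := by
  unfold dGr
  rw [real_inner_smul_left, real_inner_smul_right, abs_mul, abs_mul,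
    abs_of_nonneg (inv_nonneg.2 (norm_nonneg u)), abs_of_nonneg (inv_nonneg.2 (norm_nonneg v))]
  congr 1
  field_simp

/-- Triangle inequality for the 1D Grassmann distance. -/
theorem dGr_triangle {E : Type*} [NormedAddCommGroup E] [InnerProductSpace ℝ E]
    (u v w : E) (hu : u ≠ 0) (hv : v ≠ 0) (hw : w ≠ 0) :
    dGr u w ≤ dGr u v + dGr v w := by
  set u' := ‖u‖⁻¹ • u with hu'
  set v' := ‖v‖⁻¹ • v with hv'
  set w' := ‖w‖⁻¹ • w with hw'
  have hnu : ‖u'‖ = 1 := norm_smul_inv_norm hu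
  have hnv : ‖v'‖ = 1 := norm_smul_inv_norm hv
  have hnw : ‖w'‖ = 1 := norm_smul_inv_norm hw
  rw [dGr_unit u w hu hw, dGr_unit u v hu hv, dGr_unit v w hv hw]
  have h1 : |⟪u', v'⟫| ≤ 1 := by
    have := abs_real_inner_le_norm u' v'; rw [hnu, hnv] at this; simpa using this
  have h2 : |⟪v', w'⟫| ≤ 1 := by
    have := abs_real_inner_le_norm v' w'; rw [hnv, hnw] at this; simpa using this
  exact arccos_tri (abs_nonneg _) h1 (abs_nonneg _) h2 (key_ineq u' v' w' hnu hnv hnw)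
end

section
/- Let ι be a finite index set and for each i ∈ ι let d₁ⁱ and d₂ⁱ be unit vectors in ℝⁿ. Let R and R₀ be orthogonal linear maps of ℝⁿ, let ε > 0, and let ψ ≥ 0 be such that d_Gr(R₀ d₁ⁱ, R d₁ⁱ) ≤ ψ for every i ∈ ι, where d_Gr(x, y) := arccos(|⟨x, y⟩| / (‖x‖·‖y‖)). Then the number of indices i with d_Gr(R d₁ⁱ, d₂ⁱ)² < ε is at most the number of indices i with (max(0, d_Gr(R₀ d₁ⁱ, d₂ⁱ) − ψ))² < ε. (This establishes the upper bound ν̄_r used by the rotational branch-and-bound solver for line-to-line registration: the inlier count of any rotation R in a cube around R₀ whose induced angular perturbation is at most ψ is bounded by the relaxed inlier count at the center R₀.) -/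
/-!
The Grassmann distance between two lines is the smaller of the two angles between their
direction vectors, `dGr u v = min (angle u v) (angle u (-v))`. Choosing the signs of the
directions so that both `dGr u v` and `dGr v w` are realised as angles, the triangle inequality
for angles between vectors gives `dGr u w ≤ dGr u v + dGr v w`. Hence
`max 0 (dGr (R₀ d₁) d₂ - ψ) ≤ dGr (R d₁) d₂` for every correspondence, so every inlier for `R`
is a relaxed inlier for `R₀`.
-/

open scoped RealInnerProductSpace

open InnerProductGeometry

section Grassmann

variable {E : Type*} [NormedAddCommGroup E] [InnerProductSpace ℝ E]

theorem dGr_nonneg (u v : E) : 0 ≤ dGr u v := Real.arccos_nonneg _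

@[simp]
theorem dGr_neg_left (u v : E) : dGr (-u) v = dGr u v := by
  simp [dGr, inner_neg_left]

@[simp]
theorem dGr_neg_right (u v : E) : dGr u (-v) = dGr u v := by
  simp [dGr, inner_neg_right]

theorem dGr_le_angle (u v : E) : dGr u v ≤ angle u v :=
  Real.arccos_le_arccos (div_le_div_of_nonneg_right (le_abs_self _) (by positivity))

theorem dGr_eq_angle_or_eq_angle_neg (u v : E) :
    dGr u v = angle u v ∨ dGr u v = angle u (-v) := by
  rcases abs_choice ⟪u, v⟫ with h | h
  · left
    simp [dGr, angle, h]
  · right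
    simp [dGr, angle, h, inner_neg_right, neg_div]

theorem dGr_le_dGr_add_dGr (u v w : E) : dGr u w ≤ dGr u v + dGr v w := by
  suffices key : ∀ v, dGr u v = angle u v → dGr u w ≤ dGr u v + dGr v w by
    rcases dGr_eq_angle_or_eq_angle_neg u v with h | h
    · exact key v h
    · simpa using key (-v) (by simpa using h)
  intro v huv
  rw [huv]
  rcases dGr_eq_angle_or_eq_angle_neg v w with h | h
  · rw [h]
    exact (dGr_le_angle u w).trans (angle_le_angle_add_angle u v w)
  · rw [h, ← dGr_neg_right u w]
    exact (dGr_le_angle u (-w)).trans (angle_le_angle_add_angle u v (-w))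

theorem max_zero_dGr_sub_le_dGr {u v w : E} {ψ : ℝ} (h : dGr u v ≤ ψ) :
    max 0 (dGr u w - ψ) ≤ dGr v w :=
  max_le (dGr_nonneg v w) (by linarith [dGr_le_dGr_add_dGr u v w])

end Grassmann

theorem rotation_bnb_upper_bound_general (n : ℕ) (ι : Type*) [Fintype ι]
    (d₁ d₂ : ι → EuclideanSpace ℝ (Fin n))
    (R R₀ : EuclideanSpace ℝ (Fin n) ≃ₗᵢ[ℝ] EuclideanSpace ℝ (Fin n))
    (ε : ℝ) (ψ : ℝ)
    (hbound : ∀ i, dGr (R₀ (d₁ i)) (R (d₁ i)) ≤ ψ) :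
    {i | dGr (R (d₁ i)) (d₂ i) ^ 2 < ε}.ncard ≤
      {i | max 0 (dGr (R₀ (d₁ i)) (d₂ i) - ψ) ^ 2 < ε}.ncard := by
  refine Set.ncard_le_ncard (fun i (hi : dGr (R (d₁ i)) (d₂ i) ^ 2 < ε) => ?_) (Set.toFinite _)
  have hle := max_zero_dGr_sub_le_dGr (w := d₂ i) (hbound i)
  exact lt_of_le_of_lt (pow_le_pow_left₀ (le_max_left _ _) hle 2) hi

/-- Upper bound `ν̄_r` of the rotational BnB solver for line-to-line registration: the inlier
count of any rotation `R` whose angular deviation from the center `R₀` is at most `ψ` is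
bounded by the relaxed inlier count at `R₀`. -/
theorem rotation_bnb_upper_bound (n : ℕ) (ι : Type*) [Fintype ι]
    (d₁ d₂ : ι → EuclideanSpace ℝ (Fin n))
    (hd₁ : ∀ i, ‖d₁ i‖ = 1) (hd₂ : ∀ i, ‖d₂ i‖ = 1)
    (R R₀ : EuclideanSpace ℝ (Fin n) ≃ₗᵢ[ℝ] EuclideanSpace ℝ (Fin n))
    (ε : ℝ) (hε : 0 < ε) (ψ : ℝ) (hψ : 0 ≤ ψ)
    (hbound : ∀ i, dGr (R₀ (d₁ i)) (R (d₁ i)) ≤ ψ) :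
    {i | dGr (R (d₁ i)) (d₂ i) ^ 2 < ε}.ncard ≤
      {i | max 0 (dGr (R₀ (d₁ i)) (d₂ i) - ψ) ^ 2 < ε}.ncard :=
  rotation_bnb_upper_bound_general n ι d₁ d₂ R R₀ ε ψ hbound
end
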